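/- Let λ > 1, q ≥ 2 an integer, α = log q / log λ, and m ≥ 1 an integer. Then ∑_{a=1}^∞ q^{-a} (1 - (λ-1)/(λ^a - 1))^m ≤ C·m^{-α} for a constant C depending only on q and λ. (Upper bound half of the asymptotic estimate.) -/

import Mathlib

/-!
Since `1 - (λ-1)/(λ^b-1) ≤ exp (-(λ-1)/λ^b)`, the `b`-th summand is at most
`q^{-b} exp (-(λ-1)m/λ^b)`. Choose `N` with `λ^{N-1} ≤ m < λ^N`, so that `q^{-N} ≤ m^{-α}`.
The terms with `b > N` are bounded by `q^{-b}` and sum to `O(q^{-N})`. For `b ≤ N` use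
`exp (-x) ≤ k!/x^k` with `k` so large that `λ^k > q`: the bound `k! (λ^b/((λ-1)m))^k q^{-b}`
grows geometrically in `b`, so these terms sum to a constant times their last one, which is
`O((λ^N/m)^k q^{-N}) = O(q^{-N})`.
-/

open Real Finset
open scoped Nat

lemma one_sub_div_pow_sub_one_mem_Icc {l : ℝ} (hl : 1 < l) {b : ℕ} (hb : b ≠ 0) :
    1 - (l - 1) / (l ^ b - 1) ∈ Set.Icc 0 1 := by
  have hlb : l ≤ l ^ b := le_self_pow₀ hl.le hb
  have hden : 0 < l ^ b - 1 := by linarith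
  have hle : (l - 1) / (l ^ b - 1) ≤ 1 := (div_le_one hden).2 (by linarith)
  have hnonneg : 0 ≤ (l - 1) / (l ^ b - 1) := div_nonneg (by linarith) hden.le
  constructor <;> linarith

lemma one_sub_div_pow_sub_one_le_exp {l : ℝ} (hl : 1 < l) {b : ℕ} (hb : b ≠ 0) :
    1 - (l - 1) / (l ^ b - 1) ≤ exp (-((l - 1) / l ^ b)) := by
  have hden : 0 < l ^ b - 1 := sub_pos.2 (one_lt_pow₀ hl hb)
  have hdiv : (l - 1) / l ^ b ≤ (l - 1) / (l ^ b - 1) := by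
    gcongr
    linarith
  linarith [add_one_le_exp (-((l - 1) / l ^ b))]

lemma pow_one_sub_div_pow_sub_one_le_exp {l : ℝ} (hl : 1 < l) {b : ℕ} (hb : b ≠ 0) (m : ℕ) :
    (1 - (l - 1) / (l ^ b - 1)) ^ m ≤ exp (-(m * (l - 1) / l ^ b)) :=
  calc (1 - (l - 1) / (l ^ b - 1)) ^ m ≤ exp (-((l - 1) / l ^ b)) ^ m :=
        pow_le_pow_left₀ (one_sub_div_pow_sub_one_mem_Icc hl hb).1
          (one_sub_div_pow_sub_one_le_exp hl hb) m
    _ = exp (-(m * (l - 1) / l ^ b)) := by rw [← exp_nat_mul]; ring_nf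

lemma exp_neg_le_factorial_div_pow (k : ℕ) {x : ℝ} (hx : 0 < x) :
    exp (-x) ≤ k ! / x ^ k := by
  rw [exp_neg, ← inv_div]
  exact inv_anti₀ (by positivity) (pow_div_factorial_le_exp x hx.le k)

lemma sum_range_pow_succ_le {r : ℝ} (hr : 1 < r) (N : ℕ) :
    ∑ a ∈ range N, r ^ (a + 1) ≤ r ^ (N + 1) / (r - 1) := by
  have hr1 : 0 < r - 1 := sub_pos.2 hr
  simp_rw [pow_succ', ← mul_sum, geom_sum_eq hr.ne']
  rw [mul_div_assoc']
  gcongr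
  linarith

lemma sum_range_inv_pow_mul_exp_le {q l t : ℝ} (hq : 0 < q) (hl : 0 < l) (ht : 0 < t)
    {k : ℕ} (hk : q < l ^ k) (N : ℕ) :
    ∑ a ∈ range N, (q ^ (a + 1))⁻¹ * exp (-(t / l ^ (a + 1))) ≤
      k ! * (l ^ N / t) ^ k * (l ^ k / (l ^ k - q)) * (q ^ N)⁻¹ := by
  set r := l ^ k / q
  have hr : 1 < r := (one_lt_div hq).2 hk
  have hterm : ∀ a : ℕ, (q ^ (a + 1))⁻¹ * exp (-(t / l ^ (a + 1))) ≤ k ! / t ^ k * r ^ (a + 1) :=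
    fun a => calc
      (q ^ (a + 1))⁻¹ * exp (-(t / l ^ (a + 1)))
          ≤ (q ^ (a + 1))⁻¹ * (k ! / (t / l ^ (a + 1)) ^ k) := by
        gcongr
        exact exp_neg_le_factorial_div_pow k (by positivity)
      _ = k ! / t ^ k * r ^ (a + 1) := by
        simp only [r, div_pow, ← pow_mul]
        field_simp
        ring
  calc ∑ a ∈ range N, (q ^ (a + 1))⁻¹ * exp (-(t / l ^ (a + 1)))
      ≤ ∑ a ∈ range N, k ! / t ^ k * r ^ (a + 1) := sum_le_sum fun a _ => hterm a
    _ = k ! / t ^ k * ∑ a ∈ range N, r ^ (a + 1) := by rw [mul_sum]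
    _ ≤ k ! / t ^ k * (r ^ (N + 1) / (r - 1)) := by gcongr; exact sum_range_pow_succ_le hr N
    _ = k ! * (l ^ N / t) ^ k * (l ^ k / (l ^ k - q)) * (q ^ N)⁻¹ := by
        have hlq : l ^ k - q ≠ 0 := (sub_pos.2 hk).ne'
        simp only [r, div_pow, ← pow_mul]
        field_simp
        ring

lemma tsum_le_of_sum_range_le {q : ℝ} (hq : 1 < q) {f : ℕ → ℝ} (hf₀ : ∀ a, 0 ≤ f a)
    (hf : ∀ a, f a ≤ (q ^ (a + 1))⁻¹) {N : ℕ} {C : ℝ}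
    (hhead : ∑ a ∈ range N, f a ≤ C * (q ^ N)⁻¹) :
    ∑' a, f a ≤ (C + (q - 1)⁻¹) * (q ^ N)⁻¹ := by
  have hq₀ : 0 ≤ q⁻¹ := inv_nonneg.2 (by linarith)
  have hq₁ : q⁻¹ < 1 := inv_lt_one_of_one_lt₀ hq
  have hgeom : Summable fun a : ℕ => q⁻¹ ^ (N + 1) * q⁻¹ ^ a :=
    (summable_geometric_of_lt_one hq₀ hq₁).mul_left _
  have hf' (a : ℕ) : f (a + N) ≤ q⁻¹ ^ (N + 1) * q⁻¹ ^ a := by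
    convert hf (a + N) using 1
    rw [← inv_pow, ← pow_add]
    ring_nf
  have htail_summable : Summable fun a => f (a + N) :=
    hgeom.of_nonneg_of_le (fun a => hf₀ _) hf'
  have htail : ∑' a, f (a + N) ≤ (q - 1)⁻¹ * (q ^ N)⁻¹ :=
    calc ∑' a, f (a + N) ≤ ∑' a, q⁻¹ ^ (N + 1) * q⁻¹ ^ a :=
          htail_summable.tsum_le_tsum hf' hgeom
      _ = (q - 1)⁻¹ * (q ^ N)⁻¹ := by
          have hq1 : q - 1 ≠ 0 := by linarith
          rw [tsum_mul_left, tsum_geometric_of_lt_one hq₀ hq₁, inv_pow]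
          field_simp
          ring
  rw [← ((summable_nat_add_iff N).1 htail_summable).sum_add_tsum_nat_add N]
  linarith

lemma inv_pow_le_rpow_neg_log_div_log {q l x : ℝ} (hq : 1 ≤ q) (hl : 1 < l) (hx : 0 < x)
    {N : ℕ} (hxN : x ≤ l ^ N) : (q ^ N)⁻¹ ≤ x ^ (-(log q / log l)) := by
  have hα : 0 ≤ log q / log l := div_nonneg (log_nonneg hq) (log_pos hl).le
  have hl₀ : 0 ≤ l := by linarith
  calc (q ^ N)⁻¹ = ((l ^ N : ℝ) ^ (log q / log l))⁻¹ := by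
        rw [← rpow_natCast l, ← rpow_mul hl₀, mul_comm, rpow_mul hl₀, log_div_log,
          rpow_logb (by linarith) hl.ne' (by linarith), rpow_natCast]
    _ = (l ^ N : ℝ) ^ (-(log q / log l)) := (rpow_neg (by positivity) _).symm
    _ ≤ x ^ (-(log q / log l)) := rpow_le_rpow_of_nonpos hx hxN (neg_nonpos.2 hα)

/-- Upper bound: for `λ > 1`, integer `q ≥ 2`, `α = log q / log λ`, and every `m ≥ 1`,
`∑_{a≥1} q^{-a} (1-(λ-1)/(λ^a-1))^m ≤ C·m^{-α}` for a constant `C = C(q,λ)`. -/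
theorem stmt_5 (l : ℝ) (hl : 1 < l) (q : ℕ) (hq : 2 ≤ q) :
    ∃ C : ℝ, 0 < C ∧ ∀ m : ℕ, 1 ≤ m →
      (∑' a : ℕ, ((q : ℝ) ^ (a + 1))⁻¹ * (1 - (l - 1) / (l ^ (a + 1) - 1)) ^ m) ≤
        C * (m : ℝ) ^ (-(Real.log q / Real.log l)) := by
  have hq₁ : (1 : ℝ) < q := by exact_mod_cast hq
  have hl₁ : 0 < l - 1 := by linarith
  obtain ⟨k, hk⟩ := pow_unbounded_of_one_lt (q : ℝ) hl
  have hkq : 0 < l ^ k - q := by linarith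
  have hq₀ : (0 : ℝ) < q - 1 := by linarith
  refine ⟨k ! * (l / (l - 1)) ^ k * (l ^ k / (l ^ k - q)) + ((q : ℝ) - 1)⁻¹, by positivity,
    fun m hm => ?_⟩
  have hm : (1 : ℝ) ≤ m := by exact_mod_cast hm
  obtain ⟨n, hln, hml⟩ := exists_nat_pow_near hm hl
  have hratio : l ^ (n + 1) / (m * (l - 1)) ≤ l / (l - 1) := by
    rw [div_le_div_iff₀ (by positivity) hl₁, pow_succ']
    nlinarith [mul_le_mul_of_nonneg_left hln (by positivity : (0 : ℝ) ≤ l * (l - 1))]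
  refine (tsum_le_of_sum_range_le hq₁ (N := n + 1) (fun a => ?_) (fun a => ?_) ?_).trans
    (by gcongr; exact inv_pow_le_rpow_neg_log_div_log hq₁.le hl (by linarith) hml.le)
  · have := (one_sub_div_pow_sub_one_mem_Icc hl a.succ_ne_zero).1
    positivity
  · obtain ⟨h₀, h₁⟩ := one_sub_div_pow_sub_one_mem_Icc hl a.succ_ne_zero
    exact mul_le_of_le_one_right (by positivity) (pow_le_one₀ h₀ h₁)
  · calc ∑ a ∈ range (n + 1), ((q : ℝ) ^ (a + 1))⁻¹ * (1 - (l - 1) / (l ^ (a + 1) - 1)) ^ m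
        ≤ ∑ a ∈ range (n + 1), ((q : ℝ) ^ (a + 1))⁻¹ * exp (-(m * (l - 1) / l ^ (a + 1))) :=
          sum_le_sum fun a _ => by
            gcongr
            exact pow_one_sub_div_pow_sub_one_le_exp hl a.succ_ne_zero m
      _ ≤ _ := sum_range_inv_pow_mul_exp_le (by linarith) (by linarith) (by positivity) hk _
      _ ≤ k ! * (l / (l - 1)) ^ k * (l ^ k / (l ^ k - q)) * ((q : ℝ) ^ (n + 1))⁻¹ := by
          gcongr
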